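/- arXiv:1704.05644 — 3 statements merged into one kernel-verified Lean document; each statement's English description precedes it below -/
import Mathlib

section
/- Let φ : ℝ₊ → ℝ be continuous with φ > 0 on ℝ₊, and let Φ(y, t) denote the flow of the ODE dΦ/dt = φ(Φ) with Φ(y,0) = y, assumed well-defined for all t ≥ 0. Suppose φ ≤ M on ℝ₊ for some M > 0. Then for all y > 0, h > 0 and u > 0: Φ(y + h, u) - Φ(y, u) ≥ (m/M)·h, where m = min of φ on [Φ(y,u), Φ(y,u) + h]. Consequently, whenever the partial derivative ∂Φ/∂y(y,u) exists, it satisfies ∂Φ/∂y(y,u) ≥ (min_{[0, y+Mu]} φ)/M. -/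
/-!
Positivity of `φ` makes every orbit nondecreasing and `φ ≤ M` makes it `M`-Lipschitz, so the
orbit of `y` reaches `y + h` no earlier than at time `h / M`. Since orbits cannot cross, the
orbit of `y + h` stays ahead of the orbit of `y` shifted by `h / M`, whence
`Φ(y + h, u) ≥ Φ(y, u + h/M) = Φ(y, u) + ∫_u^{u + h/M} φ(Φ(y, s)) ds ≥ Φ(y, u) + m h / M`.
Dividing by `h` and letting `h → 0⁺` bounds the derivative from below by `φ(Φ(y, u)) / M`,
and `Φ(y, u) ∈ [0, y + M u]`.
-/

open MeasureTheory Set Filter Topology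

def IsIntegralSolution (φ : ℝ → ℝ) (y : ℝ) (g : ℝ → ℝ) : Prop :=
  ∀ t, 0 ≤ t → g t = y + ∫ s in (0 : ℝ)..t, φ (g s)

theorem tendsto_sInf_image_Icc {f : ℝ → ℝ} (hf : Continuous f) (c : ℝ) :
    Tendsto (fun h => sInf (f '' Icc c (c + h))) (𝓝[>] 0) (𝓝 (f c)) := by
  have hcont : Continuous fun h => sInf ((fun s => f (h * s + c)) '' Icc 0 1) :=
    isCompact_Icc.continuous_sInf (by fun_prop)
  have hlim := (hcont.tendsto 0).mono_left (nhdsWithin_le_nhds (s := Ioi 0))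
  simp only [zero_mul, zero_add, (nonempty_Icc.2 zero_le_one).image_const, csInf_singleton]
    at hlim
  refine hlim.congr' (eventually_nhdsWithin_of_forall fun h (hh : 0 < h) => ?_)
  have hIcc : Icc c (c + h) = (h * · + c) '' Icc 0 1 := by
    rw [image_affine_Icc' hh]; simp [add_comm]
  simp only [hIcc, image_image]

namespace IsIntegralSolution

variable {φ g : ℝ → ℝ} {y M : ℝ}

theorem apply_zero (hg : IsIntegralSolution φ y g) : g 0 = y := by
  simp [hg 0 le_rfl]

/-- Where the integrand is not integrable, the junk value `0` of the integral makes `g t = y`. -/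
theorem apply_eq_of_not_intervalIntegrable (hg : IsIntegralSolution φ y g) {t : ℝ} (ht : 0 ≤ t)
    (hint : ¬ IntervalIntegrable (fun s => φ (g s)) volume 0 t) : g t = y := by
  rw [hg t ht, intervalIntegral.integral_undef hint, add_zero]

theorem continuousOn_Icc (hg : IsIntegralSolution φ y g) {t : ℝ} (ht : 0 ≤ t)
    (hint : IntervalIntegrable (fun s => φ (g s)) volume 0 t) : ContinuousOn g (Icc 0 t) := by
  have hprim := intervalIntegral.continuousOn_primitive_interval' hint left_mem_uIcc
  rw [uIcc_of_le ht] at hprim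
  exact (continuousOn_const.add hprim).congr fun s hs => hg s hs.1

theorem le_of_forall_pos (hφ : ∀ x, 0 ≤ x → 0 ≤ φ x) (hg : IsIntegralSolution φ y g) {r : ℝ}
    (hr : 0 ≤ r) (hpos : ∀ s ∈ Ico 0 r, 0 < g s) : y ≤ g r := by
  have hnonneg : 0 ≤ᵐ[volume.restrict (Icc 0 r)] fun s => φ (g s) := by
    rw [EventuallyLE, ← Measure.restrict_congr_set Ico_ae_eq_Icc]
    exact ae_restrict_of_forall_mem measurableSet_Ico fun s hs => hφ _ (hpos s hs).le
  rw [hg r hr]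
  linarith [intervalIntegral.integral_nonneg_of_ae_restrict hr hnonneg]

theorem pos_of_intervalIntegrable (hφ : ∀ x, 0 ≤ x → 0 ≤ φ x) (hg : IsIntegralSolution φ y g)
    (hy : 0 < y) {t : ℝ} (ht : 0 ≤ t)
    (hint : IntervalIntegrable (fun s => φ (g s)) volume 0 t) : ∀ s ∈ Icc 0 t, 0 < g s := by
  by_contra! hneg
  set S := Icc 0 t ∩ g ⁻¹' Iic 0
  have hS : IsClosed S :=
    (hg.continuousOn_Icc ht hint).preimage_isClosed_of_isClosed isClosed_Icc isClosed_Iic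
  have hSbdd : BddBelow S := ⟨0, fun _ hs => hs.1.1⟩
  have hmin : sInf S ∈ S := hS.csInf_mem hneg hSbdd
  have : y ≤ g (sInf S) := hg.le_of_forall_pos hφ hmin.1.1 fun s hs => by
    by_contra! hgs
    exact (csInf_le hSbdd ⟨⟨hs.1, hs.2.le.trans hmin.1.2⟩, hgs⟩).not_gt hs.2
  linarith [show g (sInf S) ≤ 0 from hmin.2]

theorem le_apply (hφ : ∀ x, 0 ≤ x → 0 ≤ φ x) (hg : IsIntegralSolution φ y g) (hy : 0 < y)
    {t : ℝ} (ht : 0 ≤ t) : y ≤ g t := by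
  by_cases hint : IntervalIntegrable (fun s => φ (g s)) volume 0 t
  · exact hg.le_of_forall_pos hφ ht fun s hs =>
      hg.pos_of_intervalIntegrable hφ hy ht hint s (Ico_subset_Icc_self hs)
  · exact (hg.apply_eq_of_not_intervalIntegrable ht hint).ge

theorem intervalIntegrable_zero_left (hφc : Continuous φ) (hφ : ∀ x, 0 ≤ x → 0 ≤ φ x)
    (hφM : ∀ x, 0 ≤ x → φ x ≤ M) (hg : IsIntegralSolution φ y g) (hy : 0 < y) {t : ℝ}
    (ht : 0 ≤ t) : IntervalIntegrable (fun s => φ (g s)) volume 0 t := by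
  set f := fun s => φ (g s)
  set B := {b : ℝ | 0 ≤ b ∧ IntervalIntegrable f volume 0 b}
  have hB0 : (0 : ℝ) ∈ B := ⟨le_rfl, .refl⟩
  by_contra hnot
  have hBbdd : BddAbove B := ⟨t, fun b hb => by
    by_contra! htb
    exact hnot (hb.2.mono_set (uIcc_subset_uIcc_left (by simp [uIcc_of_le hb.1, ht, htb.le])))⟩
  set τ := sSup B
  have hτ : 0 ≤ τ := le_csSup hBbdd hB0
  have hbound : ∀ s, 0 ≤ s → ‖f s‖ ≤ M := fun s hs => by
    have hgs : 0 ≤ g s := hy.le.trans (hg.le_apply hφ hy hs)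
    rw [Real.norm_of_nonneg (hφ _ hgs)]
    exact hφM _ hgs
  -- If `f` fails to be integrable up to some time, let `τ` be the supremum of the times up to
  -- which it is; then `f` is integrable up to `τ + 1`: below `τ` the solution is continuous and
  -- `f` is bounded by `M`, above `τ` the solution is constantly `y`.
  have hIoo : IntegrableOn f (Ioo 0 τ) := by
    refine .of_bound measure_Ioo_lt_top (ContinuousOn.aestronglyMeasurable (fun s hs => ?_)
      measurableSet_Ioo) M (ae_restrict_of_forall_mem measurableSet_Ioo fun s hs => hbound s hs.1.le)
    obtain ⟨b, hb, hsb⟩ := exists_lt_of_lt_csSup ⟨0, hB0⟩ hs.2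
    exact (hφc.continuousAt.comp <| (hg.continuousOn_Icc hb.1 hb.2).continuousAt
      (Icc_mem_nhds hs.1 hsb)).continuousWithinAt
  have hIoc : IntegrableOn f (Ioc τ (τ + 1)) := by
    refine (integrableOn_const (C := φ y) measure_Ioc_lt_top.ne).congr_fun (fun s hs => ?_)
      measurableSet_Ioc
    have hsB : s ∉ B := fun h => (le_csSup hBbdd h).not_gt hs.1
    simp only [f, hg.apply_eq_of_not_intervalIntegrable (hτ.trans hs.1.le)
      fun h => hsB ⟨hτ.trans hs.1.le, h⟩]
  have hτ1 : τ + 1 ∈ B := by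
    refine ⟨by linarith, (intervalIntegrable_iff_integrableOn_Ioc_of_le (by linarith)).2 ?_⟩
    rw [← Ioc_union_Ioc_eq_Ioc hτ (by linarith)]
    exact (hIoo.congr_set_ae Ioo_ae_eq_Ioc.symm).union hIoc
  linarith [le_csSup hBbdd hτ1]

theorem intervalIntegrable (hφc : Continuous φ) (hφ : ∀ x, 0 ≤ x → 0 ≤ φ x)
    (hφM : ∀ x, 0 ≤ x → φ x ≤ M) (hg : IsIntegralSolution φ y g) (hy : 0 < y) {a b : ℝ}
    (ha : 0 ≤ a) (hb : 0 ≤ b) : IntervalIntegrable (fun s => φ (g s)) volume a b :=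
  (hg.intervalIntegrable_zero_left hφc hφ hφM hy ha).symm.trans
    (hg.intervalIntegrable_zero_left hφc hφ hφM hy hb)

theorem eq_add_integral (hφc : Continuous φ) (hφ : ∀ x, 0 ≤ x → 0 ≤ φ x)
    (hφM : ∀ x, 0 ≤ x → φ x ≤ M) (hg : IsIntegralSolution φ y g) (hy : 0 < y) {a b : ℝ}
    (ha : 0 ≤ a) (hb : 0 ≤ b) : g b = g a + ∫ s in a..b, φ (g s) := by
  rw [hg b hb, hg a ha, add_assoc, intervalIntegral.integral_add_adjacent_intervals
    (hg.intervalIntegrable hφc hφ hφM hy le_rfl ha) (hg.intervalIntegrable hφc hφ hφM hy ha hb)]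

theorem continuousOn (hφc : Continuous φ) (hφ : ∀ x, 0 ≤ x → 0 ≤ φ x)
    (hφM : ∀ x, 0 ≤ x → φ x ≤ M) (hg : IsIntegralSolution φ y g) (hy : 0 < y) :
    ContinuousOn g (Ici 0) := fun t ht =>
  have ht : (0 : ℝ) ≤ t := ht
  ((hg.continuousOn_Icc (by linarith) (hg.intervalIntegrable hφc hφ hφM hy le_rfl
    (by linarith))).continuousWithinAt ⟨ht, by linarith⟩).mono_of_mem_nhdsWithin
    (inter_mem_nhdsWithin _ (Iic_mem_nhds (lt_add_one t)))

theorem monotoneOn (hφc : Continuous φ) (hφ : ∀ x, 0 ≤ x → 0 ≤ φ x)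
    (hφM : ∀ x, 0 ≤ x → φ x ≤ M) (hg : IsIntegralSolution φ y g) (hy : 0 < y) :
    MonotoneOn g (Ici 0) := fun a ha b hb hab => by
  rw [hg.eq_add_integral hφc hφ hφM hy ha hb, le_add_iff_nonneg_right]
  exact intervalIntegral.integral_nonneg hab fun s hs =>
    hφ _ (hy.le.trans (hg.le_apply hφ hy (ha.trans hs.1)))

theorem le_add_mul_sub (hφc : Continuous φ) (hφ : ∀ x, 0 ≤ x → 0 ≤ φ x)
    (hφM : ∀ x, 0 ≤ x → φ x ≤ M) (hg : IsIntegralSolution φ y g) (hy : 0 < y) {a b : ℝ}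
    (ha : 0 ≤ a) (hab : a ≤ b) : g b ≤ g a + M * (b - a) := by
  have hle : ∫ s in a..b, φ (g s) ≤ ∫ _ in a..b, M :=
    intervalIntegral.integral_mono_on hab (hg.intervalIntegrable hφc hφ hφM hy ha (ha.trans hab))
      intervalIntegrable_const fun s hs => hφM _ (hy.le.trans (hg.le_apply hφ hy (ha.trans hs.1)))
  rw [intervalIntegral.integral_const, smul_eq_mul] at hle
  rw [hg.eq_add_integral hφc hφ hφM hy ha (ha.trans hab)]
  linarith

theorem comp_const_add (hφc : Continuous φ) (hφ : ∀ x, 0 ≤ x → 0 ≤ φ x)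
    (hφM : ∀ x, 0 ≤ x → φ x ≤ M) (hg : IsIntegralSolution φ y g) (hy : 0 < y) {r : ℝ}
    (hr : 0 ≤ r) : IsIntegralSolution φ (g r) (fun t => g (r + t)) := fun t ht => by
  dsimp only
  rw [hg.eq_add_integral hφc hφ hφM hy hr (b := r + t) (by linarith),
    intervalIntegral.integral_comp_add_left (fun s => φ (g s)), add_zero]

theorem mul_sInf_le_sub (hφc : Continuous φ) (hφ : ∀ x, 0 ≤ x → 0 ≤ φ x)
    (hφM : ∀ x, 0 ≤ x → φ x ≤ M) (hg : IsIntegralSolution φ y g) (hy : 0 < y) {u k : ℝ}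
    (hu : 0 ≤ u) (hk : 0 ≤ k) :
    k * sInf (φ '' Icc (g u) (g u + M * k)) ≤ g (u + k) - g u := by
  have hmem : ∀ s ∈ Icc u (u + k), g s ∈ Icc (g u) (g u + M * k) := fun s hs =>
    ⟨hg.monotoneOn hφc hφ hφM hy hu (hu.trans hs.1) hs.1,
      (hg.le_add_mul_sub hφc hφ hφM hy hu hs.1).trans
        (by gcongr; · exact (hφM 0 le_rfl).trans' (hφ 0 le_rfl)
            · linarith [hs.2])⟩
  have hle := intervalIntegral.integral_mono_on (by linarith) intervalIntegrable_const
    (hg.intervalIntegrable hφc hφ hφM hy hu (by linarith)) fun s hs =>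
      csInf_le (isCompact_Icc.image hφc).bddBelow (mem_image_of_mem φ (hmem s hs))
  rw [intervalIntegral.integral_const, smul_eq_mul, add_sub_cancel_left] at hle
  rw [hg.eq_add_integral hφc hφ hφM hy hu (b := u + k) (by linarith)]
  linarith

end IsIntegralSolution

section Flow

variable {φ : ℝ → ℝ} {Φ : ℝ → ℝ → ℝ} {M : ℝ}

theorem flow_add (hφc : Continuous φ) (hφ : ∀ x, 0 ≤ x → 0 ≤ φ x) (hφM : ∀ x, 0 ≤ x → φ x ≤ M)
    (hflow : ∀ y, 0 ≤ y → IsIntegralSolution φ y (Φ y))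
    (huniq : ∀ y, 0 ≤ y → ∀ g : ℝ → ℝ, ContinuousOn g (Ici 0) →
      IsIntegralSolution φ y g → ∀ t, 0 ≤ t → g t = Φ y t)
    {y r t : ℝ} (hy : 0 < y) (hr : 0 ≤ r) (ht : 0 ≤ t) : Φ y (r + t) = Φ (Φ y r) t := by
  have hg := hflow y hy.le
  refine huniq _ (hy.le.trans (hg.le_apply hφ hy hr)) _ ?_
    (hg.comp_const_add hφc hφ hφM hy hr) t ht
  exact (hg.continuousOn hφc hφ hφM hy).comp (continuousOn_const.add continuousOn_id)
    fun s (hs : 0 ≤ s) => show 0 ≤ r + s by linarith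

/-- Two orbits that meet at time `r` coincide afterwards, so by the intermediate value theorem
they cannot cross. -/
theorem flow_mono_left (hφc : Continuous φ) (hφ : ∀ x, 0 ≤ x → 0 ≤ φ x)
    (hφM : ∀ x, 0 ≤ x → φ x ≤ M) (hflow : ∀ y, 0 ≤ y → IsIntegralSolution φ y (Φ y))
    (huniq : ∀ y, 0 ≤ y → ∀ g : ℝ → ℝ, ContinuousOn g (Ici 0) →
      IsIntegralSolution φ y g → ∀ t, 0 ≤ t → g t = Φ y t)
    {y₁ y₂ t : ℝ} (hy₁ : 0 < y₁) (hy : y₁ ≤ y₂) (ht : 0 ≤ t) : Φ y₁ t ≤ Φ y₂ t := by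
  have hy₂ : 0 < y₂ := hy₁.trans_le hy
  by_contra! hlt
  obtain ⟨r, hr, hmeet⟩ : ∃ r ∈ Icc 0 t, Φ y₁ r - Φ y₂ r = 0 := by
    refine intermediate_value_Icc ht ?_ ⟨?_, by linarith⟩
    · exact (((hflow y₁ hy₁.le).continuousOn hφc hφ hφM hy₁).sub
        ((hflow y₂ hy₂.le).continuousOn hφc hφ hφM hy₂)).mono fun s hs => hs.1
    · simp only [(hflow _ hy₁.le).apply_zero, (hflow _ hy₂.le).apply_zero]
      linarith
  have hsplit : ∀ y, 0 < y → Φ y t = Φ (Φ y r) (t - r) := fun y hy => by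
    rw [← flow_add hφc hφ hφM hflow huniq hy hr.1 (by linarith [hr.2]), add_sub_cancel]
  rw [hsplit y₁ hy₁, hsplit y₂ hy₂, show Φ y₁ r = Φ y₂ r by linarith] at hlt
  exact hlt.false

theorem sInf_div_mul_le_flow_sub (hφc : Continuous φ) (hφ : ∀ x, 0 ≤ x → 0 ≤ φ x)
    (hφM : ∀ x, 0 ≤ x → φ x ≤ M) (hM : 0 < M) (hflow : ∀ y, 0 ≤ y → IsIntegralSolution φ y (Φ y))
    (huniq : ∀ y, 0 ≤ y → ∀ g : ℝ → ℝ, ContinuousOn g (Ici 0) →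
      IsIntegralSolution φ y g → ∀ t, 0 ≤ t → g t = Φ y t)
    {y h u : ℝ} (hy : 0 < y) (hh : 0 ≤ h) (hu : 0 ≤ u) :
    sInf (φ '' Icc (Φ y u) (Φ y u + h)) / M * h ≤ Φ (y + h) u - Φ y u := by
  have hg := hflow y hy.le
  set k := h / M
  have hk : 0 ≤ k := div_nonneg hh hM.le
  have hMk : M * k = h := mul_div_cancel₀ h hM.ne'
  -- The orbit of `y` needs time at least `h / M` to reach `y + h`.
  have hshift : Φ y (u + k) ≤ Φ (y + h) u := by
    rw [add_comm, flow_add hφc hφ hφM hflow huniq hy hk hu]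
    refine flow_mono_left hφc hφ hφM hflow huniq (hy.trans_le (hg.le_apply hφ hy hk)) ?_ hu
    simpa [hg.apply_zero, hMk] using hg.le_add_mul_sub hφc hφ hφM hy le_rfl hk
  have hinc := hg.mul_sInf_le_sub hφc hφ hφM hy hu hk
  rw [hMk] at hinc
  calc sInf (φ '' Icc (Φ y u) (Φ y u + h)) / M * h
      = k * sInf (φ '' Icc (Φ y u) (Φ y u + h)) := by ring
    _ ≤ _ := by linarith

theorem sInf_div_le_of_hasDerivAt (hφc : Continuous φ) (hφ : ∀ x, 0 ≤ x → 0 ≤ φ x)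
    (hφM : ∀ x, 0 ≤ x → φ x ≤ M) (hM : 0 < M) (hflow : ∀ y, 0 ≤ y → IsIntegralSolution φ y (Φ y))
    (huniq : ∀ y, 0 ≤ y → ∀ g : ℝ → ℝ, ContinuousOn g (Ici 0) →
      IsIntegralSolution φ y g → ∀ t, 0 ≤ t → g t = Φ y t)
    {y u D : ℝ} (hy : 0 < y) (hu : 0 ≤ u) (hD : HasDerivAt (fun z => Φ z u) D y) :
    sInf (φ '' Icc 0 (y + M * u)) / M ≤ D := by
  have hg := hflow y hy.le
  have hφD : φ (Φ y u) / M ≤ D := by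
    refine le_of_tendsto_of_tendsto ((tendsto_sInf_image_Icc hφc _).div_const M)
      hD.tendsto_slope_zero_right (eventually_nhdsWithin_of_forall fun h (hh : 0 < h) => ?_)
    simp only [smul_eq_mul]
    rw [le_inv_mul_iff₀ hh, mul_comm]
    exact sInf_div_mul_le_flow_sub hφc hφ hφM hM hflow huniq hy hh.le hu
  have hmem : Φ y u ∈ Icc 0 (y + M * u) :=
    ⟨hy.le.trans (hg.le_apply hφ hy hu), by
      simpa [hg.apply_zero] using hg.le_add_mul_sub hφc hφ hφM hy le_rfl hu⟩
  calc sInf (φ '' Icc 0 (y + M * u)) / M ≤ φ (Φ y u) / M := by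
        gcongr
        exact csInf_le (isCompact_Icc.image hφc).bddBelow (mem_image_of_mem φ hmem)
    _ ≤ D := hφD

end Flow

/-- for the flow `Φ` of a continuous positive vector field `φ ≤ M` on `ℝ₊`,
`Φ(y+h, u) - Φ(y, u) ≥ (m/M)·h` with `m = inf φ` on `[Φ(y,u), Φ(y,u)+h]`, and consequently
`∂Φ/∂y(y,u) ≥ (min_{[0, y+Mu]} φ)/M` whenever this derivative exists. -/
theorem stmt5
    (φ : ℝ → ℝ) (M : ℝ) (hM : 0 < M)
    (hφc : Continuous φ) (hφpos : ∀ y, 0 ≤ y → 0 < φ y) (hφM : ∀ y, 0 ≤ y → φ y ≤ M)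
    (Φ : ℝ → ℝ → ℝ)
    (hflow : ∀ y, 0 ≤ y → ∀ t, 0 ≤ t → Φ y t = y + ∫ s in (0:ℝ)..t, φ (Φ y s))
    (huniq : ∀ y, 0 ≤ y → ∀ g : ℝ → ℝ, ContinuousOn g (Set.Ici 0) →
      (∀ t, 0 ≤ t → g t = y + ∫ s in (0:ℝ)..t, φ (g s)) → ∀ t, 0 ≤ t → g t = Φ y t) :
    (∀ y h u : ℝ, 0 < y → 0 < h → 0 < u →
      sInf (φ '' Set.Icc (Φ y u) (Φ y u + h)) / M * h ≤ Φ (y + h) u - Φ y u) ∧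
    (∀ y u D : ℝ, 0 < y → 0 < u → HasDerivAt (fun z => Φ z u) D y →
      sInf (φ '' Set.Icc 0 (y + M * u)) / M ≤ D) := by
  have hφ : ∀ x, 0 ≤ x → 0 ≤ φ x := fun x hx => (hφpos x hx).le
  exact ⟨fun y h u hy hh hu => sInf_div_mul_le_flow_sub hφc hφ hφM hM hflow huniq hy hh.le hu.le,
    fun y u D hy hu hD => sInf_div_le_of_hasDerivAt hφc hφ hφM hM hflow huniq hy hu.le hD⟩
end

section
/- Let φ : ℝ₊ → ℝ be continuous with 0 < φ ≤ M, and Φ its flow as above. Then for all y > 0 and u > 0, whenever ∂Φ/∂y(y,u) exists, (min_{[0,y+Mu]} φ)/M ≤ ∂Φ/∂y(y,u) ≤ M/(min_{[0,y+Mu]} φ). -/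
/-!
On `ℝ`, a vector field `ψ` with `0 < ψ ≤ M` can be integrated by separation of variables: the
travel time `T x = ∫₀ˣ dz / ψ z` is an increasing bijection of `ℝ`, and the flow is
`Φ(y, t) = T⁻¹(t + T y)`. Differentiating in `y` gives `∂Φ/∂y(y, u) = ψ(Φ(y, u)) / ψ(y)`, and since
the speed is at most `M`, `y ≤ Φ(y, u) ≤ y + M u`; so numerator and denominator both lie between
the minimum of `φ` on `[0, y + M u]` and `M`. The given `φ` lives on `[0, ∞)`: it is extended by
`z ↦ φ (max z 0)`, and uniqueness of solutions identifies `Φ` with the explicit flow.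
-/

open MeasureTheory Filter Set Topology

noncomputable section

section TravelTime

variable {ψ : ℝ → ℝ} {M : ℝ}

def travelTime (ψ : ℝ → ℝ) (x : ℝ) : ℝ := ∫ z in (0 : ℝ)..x, (ψ z)⁻¹

theorem hasDerivAt_travelTime (hc : Continuous ψ) (hne : ∀ z, ψ z ≠ 0) (x : ℝ) :
    HasDerivAt (travelTime ψ) (ψ x)⁻¹ x :=
  have hinv : Continuous fun z => (ψ z)⁻¹ := hc.inv₀ hne
  intervalIntegral.integral_hasDerivAt_right (hinv.intervalIntegrable _ _)
    (hinv.stronglyMeasurableAtFilter _ _) hinv.continuousAt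

theorem strictMono_travelTime (hc : Continuous ψ) (hpos : ∀ z, 0 < ψ z) :
    StrictMono (travelTime ψ) :=
  strictMono_of_hasDerivAt_pos (hasDerivAt_travelTime hc fun z => (hpos z).ne')
    fun x => inv_pos.mpr (hpos x)

theorem sub_div_le_travelTime_sub (hc : Continuous ψ) (hpos : ∀ z, 0 < ψ z)
    (hM : ∀ z, ψ z ≤ M) {a b : ℝ} (hab : a ≤ b) :
    (b - a) / M ≤ travelTime ψ b - travelTime ψ a := by
  have hinv : Continuous fun z => (ψ z)⁻¹ := hc.inv₀ fun z => (hpos z).ne'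
  rw [travelTime, travelTime, intervalIntegral.integral_interval_sub_left
    (hinv.intervalIntegrable _ _) (hinv.intervalIntegrable _ _)]
  calc (b - a) / M = ∫ _ in a..b, M⁻¹ := by simp [div_eq_mul_inv]
    _ ≤ ∫ z in a..b, (ψ z)⁻¹ :=
      intervalIntegral.integral_mono_on hab intervalIntegrable_const
        (hinv.intervalIntegrable _ _) fun z _ => inv_anti₀ (hpos z) (hM z)

theorem surjective_travelTime (hc : Continuous ψ) (hpos : ∀ z, 0 < ψ z)
    (hM : ∀ z, ψ z ≤ M) : Function.Surjective (travelTime ψ) := by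
  have hM₀ : 0 < M := (hpos 0).trans_le (hM 0)
  have hcont : Continuous (travelTime ψ) := continuous_iff_continuousAt.2 fun x =>
    (hasDerivAt_travelTime hc (fun z => (hpos z).ne') x).continuousAt
  refine hcont.surjective ?_ ?_
  · refine tendsto_atTop_mono' _ ?_
      (tendsto_atTop_add_const_left _ (travelTime ψ 0) (tendsto_id.atTop_div_const hM₀))
    filter_upwards [eventually_ge_atTop 0] with x hx
    have := sub_div_le_travelTime_sub hc hpos hM hx
    simp only [id, sub_zero] at this ⊢
    linarith
  · refine tendsto_atBot_mono' _ ?_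
      (tendsto_atBot_add_const_left _ (travelTime ψ 0) (tendsto_id.atBot_div_const hM₀))
    filter_upwards [eventually_le_atBot 0] with x hx
    have := sub_div_le_travelTime_sub hc hpos hM hx
    simp only [id, zero_sub, neg_div] at this ⊢
    linarith

variable (hc : Continuous ψ) (hpos : ∀ z, 0 < ψ z) (hM : ∀ z, ψ z ≤ M)

def travelTimeIso : ℝ ≃o ℝ :=
  StrictMono.orderIsoOfSurjective _ (strictMono_travelTime hc hpos)
    (surjective_travelTime hc hpos hM)

@[simp]
theorem travelTimeIso_apply (x : ℝ) : travelTimeIso hc hpos hM x = travelTime ψ x := rfl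

theorem hasDerivAt_travelTimeIso_symm (t : ℝ) :
    HasDerivAt (travelTimeIso hc hpos hM).symm (ψ ((travelTimeIso hc hpos hM).symm t)) t := by
  have := HasDerivAt.of_local_left_inverse (a := t)
    (travelTimeIso hc hpos hM).symm.continuous.continuousAt
    (hasDerivAt_travelTime hc (fun z => (hpos z).ne') _) (inv_ne_zero (hpos _).ne')
    (Eventually.of_forall (travelTimeIso hc hpos hM).apply_symm_apply)
  rwa [inv_inv] at this

def travelFlow (y t : ℝ) : ℝ := (travelTimeIso hc hpos hM).symm (t + travelTime ψ y)

theorem travelFlow_zero (y : ℝ) : travelFlow hc hpos hM y 0 = y := by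
  rw [travelFlow, zero_add, ← travelTimeIso_apply hc hpos hM, OrderIso.symm_apply_apply]

theorem continuous_travelFlow (y : ℝ) : Continuous (travelFlow hc hpos hM y) :=
  (travelTimeIso hc hpos hM).symm.continuous.comp (continuous_add_const _)

theorem monotone_travelFlow (y : ℝ) : Monotone (travelFlow hc hpos hM y) :=
  (travelTimeIso hc hpos hM).symm.monotone.comp fun _ _ h => by gcongr

theorem hasDerivAt_travelFlow (y t : ℝ) :
    HasDerivAt (travelFlow hc hpos hM y) (ψ (travelFlow hc hpos hM y t)) t :=
  (hasDerivAt_travelTimeIso_symm hc hpos hM _).comp_add_const t _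

theorem travelFlow_eq_add_integral (y t : ℝ) :
    travelFlow hc hpos hM y t = y + ∫ s in (0 : ℝ)..t, ψ (travelFlow hc hpos hM y s) := by
  rw [intervalIntegral.integral_eq_sub_of_hasDerivAt
    (fun s _ => hasDerivAt_travelFlow hc hpos hM y s)
    ((hc.comp (continuous_travelFlow hc hpos hM y)).intervalIntegrable _ _),
    travelFlow_zero]
  ring

theorem hasDerivAt_travelFlow_initial (y t : ℝ) :
    HasDerivAt (fun z => travelFlow hc hpos hM z t)
      (ψ (travelFlow hc hpos hM y t) / ψ y) y := by
  rw [div_eq_mul_inv]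
  exact (hasDerivAt_travelTimeIso_symm hc hpos hM _).comp y
    ((hasDerivAt_travelTime hc (fun z => (hpos z).ne') y).const_add t)

theorem travelFlow_mem_Icc {t : ℝ} (ht : 0 ≤ t) (y : ℝ) :
    travelFlow hc hpos hM y t ∈ Icc y (y + M * t) := by
  have hge : y ≤ travelFlow hc hpos hM y t := by
    simpa only [travelFlow_zero] using monotone_travelFlow hc hpos hM y ht
  refine ⟨hge, ?_⟩
  have hT := sub_div_le_travelTime_sub hc hpos hM hge
  have hM₀ : 0 < M := (hpos 0).trans_le (hM 0)
  rw [← travelTimeIso_apply hc hpos hM, travelFlow, OrderIso.apply_symm_apply,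
    add_sub_cancel_right, div_le_iff₀ hM₀] at hT
  rw [travelFlow]
  linarith

theorem eq_travelFlow_of_unique {φ : ℝ → ℝ} {Φ : ℝ → ℝ → ℝ} (hψφ : ∀ z, 0 ≤ z → ψ z = φ z)
    (huniq : ∀ y, 0 ≤ y → ∀ g : ℝ → ℝ, ContinuousOn g (Ici 0) →
      (∀ t, 0 ≤ t → g t = y + ∫ s in (0 : ℝ)..t, φ (g s)) → ∀ t, 0 ≤ t → g t = Φ y t)
    {y t : ℝ} (hy : 0 ≤ y) (ht : 0 ≤ t) : Φ y t = travelFlow hc hpos hM y t := by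
  refine (huniq y hy _ (continuous_travelFlow hc hpos hM y).continuousOn (fun t ht => ?_) t ht).symm
  rw [travelFlow_eq_add_integral]
  congr 1
  refine intervalIntegral.integral_congr fun s hs => hψφ _ ?_
  rw [uIcc_of_le ht] at hs
  exact hy.trans (travelFlow_mem_Icc hc hpos hM hs.1 y).1

end TravelTime

theorem IsCompact.sInf_image_pos {α : Type*} [TopologicalSpace α] {K : Set α} {f : α → ℝ}
    (hK : IsCompact K) (hne : K.Nonempty) (hf : ContinuousOn f K) (hpos : ∀ x ∈ K, 0 < f x) :
    0 < sInf (f '' K) := by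
  obtain ⟨x, hx, hxmin⟩ := hK.exists_sInf_image_eq hne hf
  exact hxmin ▸ hpos x hx

theorem div_le_div_and_div_le_div_of_mem_Icc {m M a b : ℝ} (hm : 0 < m) (ha : a ∈ Icc m M)
    (hb : b ∈ Icc m M) : m / M ≤ a / b ∧ a / b ≤ M / m :=
  ⟨div_le_div₀ (hm.le.trans ha.1) ha.1 (hm.trans_le hb.1) hb.2,
    div_le_div₀ (hm.le.trans (ha.1.trans ha.2)) ha.2 hm hb.1⟩

end

theorem stmt6_general
    (φ : ℝ → ℝ) (M : ℝ)
    (hφc : Continuous φ) (hφpos : ∀ y, 0 ≤ y → 0 < φ y) (hφM : ∀ y, 0 ≤ y → φ y ≤ M)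
    (Φ : ℝ → ℝ → ℝ)
    (huniq : ∀ y, 0 ≤ y → ∀ g : ℝ → ℝ, ContinuousOn g (Set.Ici 0) →
      (∀ t, 0 ≤ t → g t = y + ∫ s in (0:ℝ)..t, φ (g s)) → ∀ t, 0 ≤ t → g t = Φ y t) :
    ∀ y u D : ℝ, 0 < y → 0 < u → HasDerivAt (fun z => Φ z u) D y →
      sInf (φ '' Set.Icc 0 (y + M * u)) / M ≤ D ∧
      D ≤ M / sInf (φ '' Set.Icc 0 (y + M * u)) := by
  intro y u D hy hu hD
  set ψ : ℝ → ℝ := fun z => φ (max z 0)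
  have hψc : Continuous ψ := hφc.comp (continuous_id.max continuous_const)
  have hψpos : ∀ z, 0 < ψ z := fun z => hφpos _ (le_max_right _ _)
  have hψM : ∀ z, ψ z ≤ M := fun z => hφM _ (le_max_right _ _)
  have hψφ : ∀ z, 0 ≤ z → ψ z = φ z := fun z hz => by simp only [ψ, max_eq_left hz]
  have hΦ : (fun z => Φ z u) =ᶠ[𝓝 y] fun z => travelFlow hψc hψpos hψM z u :=
    (eventually_gt_nhds hy).mono fun z hz =>
      eq_travelFlow_of_unique hψc hψpos hψM hψφ huniq hz.le hu.le
  obtain ⟨hyX, hXle⟩ := travelFlow_mem_Icc hψc hψpos hψM hu.le y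
  have hD' : D = φ (travelFlow hψc hψpos hψM y u) / φ y := by
    rw [hD.unique ((hasDerivAt_travelFlow_initial hψc hψpos hψM y u).congr_of_eventuallyEq hΦ),
      hψφ _ (hy.le.trans hyX), hψφ _ hy.le]
  set K := Icc 0 (y + M * u)
  have hM₀ : 0 < M := (hφpos 0 le_rfl).trans_le (hφM 0 le_rfl)
  have hyK : y ∈ K := ⟨hy.le, le_add_of_nonneg_right (mul_pos hM₀ hu).le⟩
  have hXK : travelFlow hψc hψpos hψM y u ∈ K := ⟨hy.le.trans hyX, hXle⟩
  have hφK : ∀ x ∈ K, φ x ∈ Icc (sInf (φ '' K)) M := fun x hx =>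
    ⟨csInf_le (isCompact_Icc.bddBelow_image hφc.continuousOn) (mem_image_of_mem φ hx), hφM x hx.1⟩
  rw [hD']
  exact div_le_div_and_div_le_div_of_mem_Icc
    (isCompact_Icc.sInf_image_pos ⟨y, hyK⟩ hφc.continuousOn fun x hx => hφpos x hx.1)
    (hφK _ hXK) (hφK _ hyK)

/-- two-sided bound on the spatial derivative of the flow of a continuous
vector field `0 < φ ≤ M`:
`(min_{[0,y+Mu]} φ)/M ≤ ∂Φ/∂y(y,u) ≤ M/(min_{[0,y+Mu]} φ)` whenever the derivative exists. -/
theorem stmt6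
    (φ : ℝ → ℝ) (M : ℝ) (hM : 0 < M)
    (hφc : Continuous φ) (hφpos : ∀ y, 0 ≤ y → 0 < φ y) (hφM : ∀ y, 0 ≤ y → φ y ≤ M)
    (Φ : ℝ → ℝ → ℝ)
    (hflow : ∀ y, 0 ≤ y → ∀ t, 0 ≤ t → Φ y t = y + ∫ s in (0:ℝ)..t, φ (Φ y s))
    (huniq : ∀ y, 0 ≤ y → ∀ g : ℝ → ℝ, ContinuousOn g (Set.Ici 0) →
      (∀ t, 0 ≤ t → g t = y + ∫ s in (0:ℝ)..t, φ (g s)) → ∀ t, 0 ≤ t → g t = Φ y t) :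
    ∀ y u D : ℝ, 0 < y → 0 < u → HasDerivAt (fun z => Φ z u) D y →
      sInf (φ '' Set.Icc 0 (y + M * u)) / M ≤ D ∧
      D ≤ M / sInf (φ '' Set.Icc 0 (y + M * u)) :=
  stmt6_general φ M hφc hφpos hφM Φ huniq
end

section
/- In the two-patch constant growth model with uniform multiplicative transfers and invariant probability π equal to a product structure where the relative population S = X¹/(X¹+X²) follows a Beta(θ₂₁/λ, θ₁₂/λ) distribution: the Beta(a,b) density f(s) ∝ s^{a-1}(1-s)^{b-1} on (0,1) is the unique stationary density of the pure-jump Markov process S on [0,1] with generator 𝒜g(s) = θ₁₂·∫₀¹ (g(s - ξs) - g(s)) dξ + θ₂₁·∫₀¹ (g(s + ξ(1-s)) - g(s)) dξ, in the sense that ∫ 𝒜g dπ = 0 for all C¹ test functions g, where a = θ₂₁/λ, b = θ₁₂/λ for an appropriate normalization λ. -/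
/-!
With `G(s) = ∫₀ˢ g`, the two jump integrals are difference quotients of `G`:
`∫₀¹ g(s - ξs) dξ = G(s)/s` and `∫₀¹ g(s + ξ(1-s)) dξ = (G(1) - G(s))/(1-s)`.
Using `θ₁₂ = bλ`, `θ₂₁ = aλ` and `w'/w = (a-1)/s - (b-1)/(1-s)` for the Beta weight
`w(s) = s^(a-1) (1-s)^(b-1)`, one checks that `(𝒜g) w` is the derivative of the flux
`λ w(s) (s ∫ₛ¹ g - (1-s) ∫₀ˢ g)`. The bracket is `O(s(1-s))`, so the flux is
`O(s^a (1-s)^b)` and vanishes at both ends, and the fundamental theorem of calculus for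
improper integrals gives `∫₀¹ (𝒜g) w = 0`.
-/

open MeasureTheory intervalIntegral Set Filter Topology

noncomputable def transferGenerator (θ12 θ21 : ℝ) (g : ℝ → ℝ) (s : ℝ) : ℝ :=
  θ12 * (∫ ξ in (0:ℝ)..1, (g (s - ξ * s) - g s)) +
    θ21 * (∫ ξ in (0:ℝ)..1, (g (s + ξ * (1 - s)) - g s))

noncomputable def betaWeight (a b s : ℝ) : ℝ := s ^ (a - 1) * (1 - s) ^ (b - 1)

noncomputable def betaFlux (θ12 θ21 a b : ℝ) (g : ℝ → ℝ) (s : ℝ) : ℝ :=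
  (θ12 + θ21) * betaWeight a b s * (s * (∫ u in s..1, g u) - (1 - s) * ∫ u in (0:ℝ)..s, g u)

section BetaWeight

variable (a b : ℝ)

theorem betaWeight_nonneg {s : ℝ} (hs : s ∈ Ioo (0:ℝ) 1) : 0 ≤ betaWeight a b s :=
  mul_nonneg (Real.rpow_nonneg hs.1.le _) (Real.rpow_nonneg (sub_nonneg.mpr hs.2.le) _)

theorem betaWeight_mul_self_mul_one_sub {s : ℝ} (hs : s ∈ Ioo (0:ℝ) 1) :
    betaWeight a b s * (s * (1 - s)) = s ^ a * (1 - s) ^ b := by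
  have hs0 : s ≠ 0 := hs.1.ne'
  have hs1 : 1 - s ≠ 0 := (sub_pos.mpr hs.2).ne'
  rw [betaWeight, Real.rpow_sub_one hs0, Real.rpow_sub_one hs1]
  field_simp

theorem hasDerivAt_betaWeight {s : ℝ} (hs : s ∈ Ioo (0:ℝ) 1) :
    HasDerivAt (betaWeight a b) (betaWeight a b s * ((a - 1) / s - (b - 1) / (1 - s))) s := by
  have hs' : 0 < 1 - s := sub_pos.mpr hs.2
  refine ((Real.hasDerivAt_rpow_const (p := a - 1) (Or.inl hs.1.ne')).mul
    ((Real.hasDerivAt_rpow_const (p := b - 1) (Or.inl hs'.ne')).comp s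
      ((hasDerivAt_id s).const_sub 1))).congr_deriv ?_
  rw [Function.comp_apply, betaWeight, Real.rpow_sub_one hs.1.ne' (a - 1),
    Real.rpow_sub_one hs'.ne' (b - 1)]
  field_simp
  ring

variable {a b}

theorem intervalIntegrable_betaWeight (ha : 0 < a) (hb : 0 < b) :
    IntervalIntegrable (betaWeight a b) volume 0 1 := by
  refine (Complex.betaIntegral_convergent (u := a) (v := b) (by simpa) (by simpa)).norm.congr_uIoo
    fun x hx ↦ ?_
  rw [uIoo_of_le zero_le_one] at hx
  have h1 : (1:ℂ) - x = ((1 - x : ℝ) : ℂ) := by push_cast; ring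
  dsimp only
  rw [norm_mul, h1, Complex.norm_cpow_eq_rpow_re_of_pos hx.1,
    Complex.norm_cpow_eq_rpow_re_of_pos (sub_pos.mpr hx.2)]
  simp [betaWeight]

end BetaWeight

section TransferGenerator

theorem integral_comp_sub_mul_self (f : ℝ → ℝ) {s : ℝ} (hs : s ≠ 0) :
    ∫ ξ in (0:ℝ)..1, f (s - ξ * s) = s⁻¹ * ∫ u in (0:ℝ)..s, f u := by
  have h := integral_comp_add_mul f (neg_ne_zero.mpr hs) s (a := 0) (b := 1)
  simp only [mul_zero, add_zero, mul_one, ← sub_eq_add_neg, sub_self, smul_eq_mul] at h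
  rw [integral_symm 0 s, inv_neg, neg_mul_neg] at h
  simpa [mul_comm, ← sub_eq_add_neg] using h

theorem integral_comp_add_mul_one_sub (f : ℝ → ℝ) {s : ℝ} (hs : s ≠ 1) :
    ∫ ξ in (0:ℝ)..1, f (s + ξ * (1 - s)) = (1 - s)⁻¹ * ∫ u in s..1, f u := by
  simpa [mul_comm] using integral_comp_add_mul f (sub_ne_zero.mpr hs.symm) s (a := 0) (b := 1)

variable {g : ℝ → ℝ} (θ12 θ21 : ℝ)

theorem transferGenerator_eq (hg : Continuous g) {s : ℝ} (hs0 : s ≠ 0) (hs1 : s ≠ 1) :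
    transferGenerator θ12 θ21 g s =
      θ12 * (s⁻¹ * (∫ u in (0:ℝ)..s, g u) - g s) +
        θ21 * ((1 - s)⁻¹ * (∫ u in s..1, g u) - g s) := by
  have hleft : Continuous fun ξ : ℝ ↦ g (s - ξ * s) := by fun_prop
  have hright : Continuous fun ξ : ℝ ↦ g (s + ξ * (1 - s)) := by fun_prop
  rw [transferGenerator, integral_sub (hleft.intervalIntegrable 0 1) intervalIntegrable_const,
    integral_sub (hright.intervalIntegrable 0 1) intervalIntegrable_const,
    integral_comp_sub_mul_self g hs0, integral_comp_add_mul_one_sub g hs1]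
  simp

theorem continuous_transferGenerator (hg : Continuous g) :
    Continuous (transferGenerator θ12 θ21 g) := by
  unfold transferGenerator
  fun_prop

end TransferGenerator

section BetaFlux

variable {θ12 θ21 a b : ℝ} {g : ℝ → ℝ}

theorem hasDerivAt_betaFlux (hg : Continuous g) (ha : a * (θ12 + θ21) = θ21)
    (hb : b * (θ12 + θ21) = θ12) {s : ℝ} (hs : s ∈ Ioo (0:ℝ) 1) :
    HasDerivAt (betaFlux θ12 θ21 a b g)
      (transferGenerator θ12 θ21 g s * betaWeight a b s) s := by
  have hs0 : s ≠ 0 := hs.1.ne'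
  have hs1 : 1 - s ≠ 0 := (sub_pos.mpr hs.2).ne'
  have hI0 : HasDerivAt (fun t ↦ ∫ u in (0:ℝ)..t, g u) (g s) s :=
    (hg.integral_hasStrictDerivAt 0 s).hasDerivAt
  have hI1 : HasDerivAt (fun t ↦ ∫ u in t..1, g u) (-g s) s :=
    integral_hasDerivAt_left (hg.intervalIntegrable _ _) (hg.stronglyMeasurableAtFilter _ _)
      hg.continuousAt
  have hP : HasDerivAt (fun t ↦ t * (∫ u in t..1, g u) - (1 - t) * ∫ u in (0:ℝ)..t, g u)
      ((∫ u in s..1, g u) + (∫ u in (0:ℝ)..s, g u) - g s) s :=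
    (((hasDerivAt_id' s).mul hI1).sub (((hasDerivAt_id' s).const_sub 1).mul hI0)).congr_deriv
      (by ring)
  refine (((hasDerivAt_betaWeight a b hs).const_mul (θ12 + θ21)).mul hP).congr_deriv ?_
  rw [transferGenerator_eq θ12 θ21 hg hs0 hs.2.ne]
  set I0 := ∫ u in (0:ℝ)..s, g u
  set I1 := ∫ u in s..1, g u
  set P := s * I1 - (1 - s) * I0
  field_simp
  linear_combination (betaWeight a b s * P * (1 - s)) * ha - (betaWeight a b s * P * s) * hb

theorem abs_intervalIntegral_le_mul_sub {M x y : ℝ} (hxy : x ≤ y)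
    (hM : ∀ u ∈ Icc x y, ‖g u‖ ≤ M) : |∫ u in x..y, g u| ≤ M * (y - x) := by
  have h := intervalIntegral.norm_integral_le_of_norm_le_const (C := M) fun u hu ↦
    hM u (Ioc_subset_Icc_self (uIoc_of_le hxy ▸ hu))
  rwa [Real.norm_eq_abs, abs_of_nonneg (sub_nonneg.mpr hxy)] at h

variable {M : ℝ}

theorem abs_betaFlux_le (hM : ∀ x ∈ Icc (0:ℝ) 1, ‖g x‖ ≤ M) {s : ℝ}
    (hs : s ∈ Ioo (0:ℝ) 1) :
    |betaFlux θ12 θ21 a b g s| ≤ |θ12 + θ21| * (2 * M) * (s ^ a * (1 - s) ^ b) := by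
  obtain ⟨hs0, hs1⟩ := hs
  have hI0 : |∫ u in (0:ℝ)..s, g u| ≤ M * s := by
    simpa using
      abs_intervalIntegral_le_mul_sub hs0.le fun u hu ↦ hM u ⟨hu.1, hu.2.trans hs1.le⟩
  have hI1 : |∫ u in s..1, g u| ≤ M * (1 - s) :=
    abs_intervalIntegral_le_mul_sub hs1.le fun u hu ↦ hM u ⟨hs0.le.trans hu.1, hu.2⟩
  have hP :
      |s * (∫ u in s..1, g u) - (1 - s) * ∫ u in (0:ℝ)..s, g u| ≤ 2 * M * (s * (1 - s)) :=
    calc _ ≤ s * |∫ u in s..1, g u| + (1 - s) * |∫ u in (0:ℝ)..s, g u| := by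
          grw [abs_sub, abs_mul, abs_mul, abs_of_pos hs0, abs_of_pos (sub_pos.mpr hs1)]
      _ ≤ s * (M * (1 - s)) + (1 - s) * (M * s) := by gcongr
      _ = 2 * M * (s * (1 - s)) := by ring
  have hw := betaWeight_nonneg a b ⟨hs0, hs1⟩
  calc |betaFlux θ12 θ21 a b g s|
      = |θ12 + θ21| * betaWeight a b s *
          |s * (∫ u in s..1, g u) - (1 - s) * ∫ u in (0:ℝ)..s, g u| := by
        rw [betaFlux, abs_mul, abs_mul, abs_of_nonneg hw]
    _ ≤ |θ12 + θ21| * betaWeight a b s * (2 * M * (s * (1 - s))) := by gcongr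
    _ = |θ12 + θ21| * (2 * M) * (s ^ a * (1 - s) ^ b) := by
        rw [← betaWeight_mul_self_mul_one_sub a b ⟨hs0, hs1⟩]
        ring

theorem tendsto_betaFlux_nhdsWithin_Ioo (hM : ∀ x ∈ Icc (0:ℝ) 1, ‖g x‖ ≤ M)
    (ha : 0 ≤ a) (hb : 0 ≤ b) {x : ℝ} (hx : x ^ a * (1 - x) ^ b = 0) :
    Tendsto (betaFlux θ12 θ21 a b g) (𝓝[Ioo 0 1] x) (𝓝 0) := by
  have hbound : Continuous fun s : ℝ ↦ |θ12 + θ21| * (2 * M) * (s ^ a * (1 - s) ^ b) :=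
    continuous_const.mul ((Real.continuous_rpow_const ha).mul
      ((Real.continuous_rpow_const hb).comp (continuous_const.sub continuous_id)))
  have hlim := hbound.tendsto x
  simp only [hx, mul_zero] at hlim
  refine squeeze_zero_norm' ?_ (tendsto_nhdsWithin_of_tendsto_nhds hlim)
  filter_upwards [self_mem_nhdsWithin] with s hs using abs_betaFlux_le hM hs

end BetaFlux

/-- the Beta(θ₂₁/λ, θ₁₂/λ) density (λ = θ₁₂ + θ₂₁) is stationary for the
relative-population jump process on [0,1] with generator
`𝒜g(s) = θ₁₂∫₀¹(g(s-ξs)-g(s))dξ + θ₂₁∫₀¹(g(s+ξ(1-s))-g(s))dξ`: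
`∫₀¹ 𝒜g(s)·s^{a-1}(1-s)^{b-1} ds = 0` for every `C¹` test function `g`. -/
theorem stmt14
    (θ12 θ21 : ℝ) (h12 : 0 < θ12) (h21 : 0 < θ21)
    (a b : ℝ) (ha : a = θ21 / (θ12 + θ21)) (hb : b = θ12 / (θ12 + θ21))
    (g : ℝ → ℝ) (hg : ContDiff ℝ 1 g) :
    ∫ s in (0:ℝ)..1,
      (θ12 * (∫ ξ in (0:ℝ)..1, (g (s - ξ * s) - g s)) +
       θ21 * (∫ ξ in (0:ℝ)..1, (g (s + ξ * (1 - s)) - g s))) *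
        (Real.rpow s (a - 1) * Real.rpow (1 - s) (b - 1)) = 0 := by
  have hL : 0 < θ12 + θ21 := add_pos h12 h21
  have ha0 : 0 < a := ha ▸ div_pos h21 hL
  have hb0 : 0 < b := hb ▸ div_pos h12 hL
  have hθ21 : a * (θ12 + θ21) = θ21 := by rw [ha, div_mul_cancel₀ _ hL.ne']
  have hθ12 : b * (θ12 + θ21) = θ12 := by rw [hb, div_mul_cancel₀ _ hL.ne']
  have hgc : Continuous g := hg.continuous
  obtain ⟨M, hM⟩ := isCompact_Icc.exists_bound_of_continuousOn (hgc.continuousOn (s := Icc 0 1))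
  have hlim0 : Tendsto (betaFlux θ12 θ21 a b g) (𝓝[>] 0) (𝓝 0) :=
    (tendsto_betaFlux_nhdsWithin_Ioo hM ha0.le hb0.le (by simp [Real.zero_rpow ha0.ne'])).mono_left
      (nhdsWithin_le_of_mem (Ioo_mem_nhdsGT zero_lt_one))
  have hlim1 : Tendsto (betaFlux θ12 θ21 a b g) (𝓝[<] 1) (𝓝 0) :=
    (tendsto_betaFlux_nhdsWithin_Ioo hM ha0.le hb0.le (by simp [Real.zero_rpow hb0.ne'])).mono_left
      (nhdsWithin_le_of_mem (Ioo_mem_nhdsLT zero_lt_one))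
  have hint : IntervalIntegrable (fun s ↦ transferGenerator θ12 θ21 g s * betaWeight a b s)
      volume 0 1 :=
    (intervalIntegrable_betaWeight ha0 hb0).continuousOn_mul
      (continuous_transferGenerator θ12 θ21 hgc).continuousOn
  change ∫ s in (0:ℝ)..1, transferGenerator θ12 θ21 g s * betaWeight a b s = 0
  rw [integral_eq_sub_of_hasDerivAt_of_tendsto zero_lt_one
    (fun s ↦ hasDerivAt_betaFlux hgc hθ21 hθ12) hint hlim0 hlim1, sub_self]
end
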